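/- arXiv:1811.08325 — 4 statements merged into one kernel-verified Lean document; each statement's English description precedes it below -/
import Mathlib

section
/- For μ and ν idempotent probability measures on compact Hausdorff spaces X and Y respectively, the assignment (⊕ᵢ φᵢ ⊙ ψᵢ) ↦ maxᵢ (μ(φᵢ) + ν(ψᵢ)) is well-defined and satisfies normality, max-plus homogeneity, and max-additivity on the set C₀ of functions of the form (x,y) ↦ maxᵢ (φᵢ(x) + ψᵢ(y)) with φᵢ ∈ C(X,ℝ), ψᵢ ∈ C(Y,ℝ). -/
/-!
If `φ x + ψ y ≤ maxⱼ (φ'ⱼ x + ψ'ⱼ y)` for all `x, y`, then `μ φ + ν ψ ≤ maxⱼ (μ φ'ⱼ + ν ψ'ⱼ)`.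
Indeed, for fixed `y` the hypothesis is an inequality `ψ y + φ ≤ maxⱼ (ψ'ⱼ y + φ'ⱼ)` in `C(X, ℝ)`;
since `μ` is monotone and commutes with finite maxima and with adding constants, it gives
`ψ y + μ φ ≤ maxⱼ (ψ'ⱼ y + μ φ'ⱼ)` for every `y`, an inequality of the same shape in `C(Y, ℝ)`,
to which `ν` is applied in turn. Well-definedness follows by symmetry, and the remaining
properties are formal consequences.
-/

open scoped BigOperators

/-- An idempotent probability measure: normality on constants, max-plus homogeneity
(addition of constants), and max-additivity (pointwise max ↦ max). -/
def IsIdemProb {X : Type*} [TopologicalSpace X] (μ : C(X, ℝ) → ℝ) : Prop :=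
  (∀ c : ℝ, μ (ContinuousMap.const X c) = c) ∧
  (∀ (c : ℝ) (φ : C(X, ℝ)), μ (ContinuousMap.const X c + φ) = c + μ φ) ∧
  (∀ φ ψ : C(X, ℝ), μ (φ ⊔ ψ) = max (μ φ) (μ ψ))

lemma Finite.ciSup_sum {α ι κ : Type*} [ConditionallyCompleteLattice α]
    [Finite ι] [Nonempty ι] [Finite κ] [Nonempty κ] (f : ι ⊕ κ → α) :
    ⨆ k, f k = (⨆ i, f (Sum.inl i)) ⊔ ⨆ j, f (Sum.inr j) :=
  le_antisymm
    (ciSup_le fun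
      | Sum.inl i => le_sup_of_le_left (Finite.le_ciSup (fun i => f (Sum.inl i)) i)
      | Sum.inr j => le_sup_of_le_right (Finite.le_ciSup (fun j => f (Sum.inr j)) j))
    (sup_le (ciSup_le fun i => Finite.le_ciSup f (Sum.inl i))
      (ciSup_le fun j => Finite.le_ciSup f (Sum.inr j)))

namespace IsIdemProb

variable {X Y : Type*} [TopologicalSpace X] [TopologicalSpace Y]
  {μ : C(X, ℝ) → ℝ} {ν : C(Y, ℝ) → ℝ}

theorem monotone (hμ : IsIdemProb μ) : Monotone μ := fun φ ψ h => by
  rw [← sup_eq_right.2 h, hμ.2.2]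
  exact le_max_left _ _

theorem map_finset_sup' (hμ : IsIdemProb μ) {ι : Type*} (s : Finset ι) (hs : s.Nonempty)
    (φ : ι → C(X, ℝ)) : μ (s.sup' hs φ) = s.sup' hs (μ ∘ φ) :=
  Finset.apply_sup'_eq_sup'_comp hs μ hμ.2.2

theorem add_le_ciSup_add {ι : Type*} [Finite ι] [Nonempty ι] (hμ : IsIdemProb μ)
    {a : ℝ} {b : ι → ℝ} {φ : C(X, ℝ)} {φ' : ι → C(X, ℝ)}
    (h : ∀ x, a + φ x ≤ ⨆ j, b j + φ' j x) :
    a + μ φ ≤ ⨆ j, b j + μ (φ' j) := by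
  cases nonempty_fintype ι
  have hle : .const X a + φ ≤
      Finset.univ.sup' Finset.univ_nonempty fun j => .const X (b j) + φ' j := fun x => by
    simpa [ContinuousMap.sup'_apply, Finset.sup'_univ_eq_ciSup] using h x
  calc a + μ φ = μ (.const X a + φ) := (hμ.2.1 a φ).symm
    _ ≤ _ := hμ.monotone hle
    _ = ⨆ j, b j + μ (φ' j) := by
      rw [hμ.map_finset_sup', Finset.sup'_univ_eq_ciSup]
      simp only [Function.comp_apply, hμ.2.1]

theorem add_le_ciSup_add_of_forall_le {ι : Type*} [Finite ι] [Nonempty ι]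
    (hμ : IsIdemProb μ) (hν : IsIdemProb ν) {φ : C(X, ℝ)} {ψ : C(Y, ℝ)}
    {φ' : ι → C(X, ℝ)} {ψ' : ι → C(Y, ℝ)}
    (h : ∀ x y, φ x + ψ y ≤ ⨆ j, φ' j x + ψ' j y) :
    μ φ + ν ψ ≤ ⨆ j, μ (φ' j) + ν (ψ' j) := by
  refine hν.add_le_ciSup_add fun y => ?_
  have hx : ∀ x, ψ y + φ x ≤ ⨆ j, ψ' j y + φ' j x := fun x => by
    simpa only [add_comm] using h x y
  simpa only [add_comm] using hμ.add_le_ciSup_add hx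

theorem ciSup_add_le_of_forall_le {ι κ : Type*} [Finite ι] [Nonempty ι] [Finite κ] [Nonempty κ]
    (hμ : IsIdemProb μ) (hν : IsIdemProb ν) {φ : ι → C(X, ℝ)} {ψ : ι → C(Y, ℝ)}
    {φ' : κ → C(X, ℝ)} {ψ' : κ → C(Y, ℝ)}
    (h : ∀ x y, ⨆ i, φ i x + ψ i y ≤ ⨆ j, φ' j x + ψ' j y) :
    ⨆ i, μ (φ i) + ν (ψ i) ≤ ⨆ j, μ (φ' j) + ν (ψ' j) :=
  ciSup_le fun i => add_le_ciSup_add_of_forall_le hμ hν fun x y =>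
    (Finite.le_ciSup (fun i => φ i x + ψ i y) i).trans (h x y)

theorem ciSup_add_eq_of_forall_eq {ι κ : Type*} [Finite ι] [Nonempty ι] [Finite κ] [Nonempty κ]
    (hμ : IsIdemProb μ) (hν : IsIdemProb ν) {φ : ι → C(X, ℝ)} {ψ : ι → C(Y, ℝ)}
    {φ' : κ → C(X, ℝ)} {ψ' : κ → C(Y, ℝ)}
    (h : ∀ x y, ⨆ i, φ i x + ψ i y = ⨆ j, φ' j x + ψ' j y) :
    ⨆ i, μ (φ i) + ν (ψ i) = ⨆ j, μ (φ' j) + ν (ψ' j) :=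
  le_antisymm (ciSup_add_le_of_forall_le hμ hν fun x y => (h x y).le)
    (ciSup_add_le_of_forall_le hμ hν fun x y => (h x y).ge)

end IsIdemProb

theorem tensor_wellDefined_isIdemProb_on_C0_general {X Y : Type*}
    [TopologicalSpace X] [TopologicalSpace Y]
    (μ : C(X, ℝ) → ℝ) (ν : C(Y, ℝ) → ℝ) (hμ : IsIdemProb μ) (hν : IsIdemProb ν) :
    -- well-definedness
    (∀ (n m : ℕ), 0 < n → 0 < m →
      ∀ (φ : Fin n → C(X, ℝ)) (ψ : Fin n → C(Y, ℝ))
        (φ' : Fin m → C(X, ℝ)) (ψ' : Fin m → C(Y, ℝ)),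
      (∀ (x : X) (y : Y), (⨆ i, (φ i x + ψ i y)) = ⨆ j, (φ' j x + ψ' j y)) →
      (⨆ i, (μ (φ i) + ν (ψ i))) = ⨆ j, (μ (φ' j) + ν (ψ' j))) ∧
    -- normality: any representation of the constant function c is sent to c
    (∀ (c : ℝ) (n : ℕ), 0 < n →
      ∀ (φ : Fin n → C(X, ℝ)) (ψ : Fin n → C(Y, ℝ)),
      (∀ (x : X) (y : Y), (⨆ i, (φ i x + ψ i y)) = c) →
      (⨆ i, (μ (φ i) + ν (ψ i))) = c) ∧
    -- max-plus homogeneity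
    (∀ (c : ℝ) (n : ℕ), 0 < n →
      ∀ (φ : Fin n → C(X, ℝ)) (ψ : Fin n → C(Y, ℝ)),
      (⨆ i, (μ (ContinuousMap.const X c + φ i) + ν (ψ i))) =
        c + ⨆ i, (μ (φ i) + ν (ψ i))) ∧
    -- max-additivity: value on a concatenation is the max of the values
    (∀ (n m : ℕ), 0 < n → 0 < m →
      ∀ (φ : Fin n → C(X, ℝ)) (ψ : Fin n → C(Y, ℝ))
        (φ' : Fin m → C(X, ℝ)) (ψ' : Fin m → C(Y, ℝ)),
      (⨆ k : Fin n ⊕ Fin m, (μ (Sum.elim φ φ' k) + ν (Sum.elim ψ ψ' k))) =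
        max (⨆ i, (μ (φ i) + ν (ψ i))) (⨆ j, (μ (φ' j) + ν (ψ' j)))) := by
  refine ⟨fun n m hn hm φ ψ φ' ψ' h => ?_, fun c n hn φ ψ h => ?_,
    fun c n hn φ ψ => ?_, fun n m hn hm φ ψ φ' ψ' => ?_⟩
  · have := Fin.pos_iff_nonempty.1 hn
    have := Fin.pos_iff_nonempty.1 hm
    exact hμ.ciSup_add_eq_of_forall_eq hν h
  · have := Fin.pos_iff_nonempty.1 hn
    calc ⨆ i, μ (φ i) + ν (ψ i)
        = ⨆ _ : Unit, μ (.const X c) + ν (.const Y 0) :=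
          hμ.ciSup_add_eq_of_forall_eq hν fun x y => by simp [h x y]
      _ = c := by rw [ciSup_const, hμ.1, hν.1, add_zero]
  · have := Fin.pos_iff_nonempty.1 hn
    simp only [hμ.2.1, add_assoc]
    exact ((OrderIso.addLeft c).map_ciSup (Finite.bddAbove_range _)).symm
  · have := Fin.pos_iff_nonempty.1 hn
    have := Fin.pos_iff_nonempty.1 hm
    exact Finite.ciSup_sum _

/-- The tensor functional μ ⊗̃ ν on the max-plus linear subspace C₀ of C(X×Y,ℝ):
well-definedness, normality, max-plus homogeneity and max-additivity. -/
theorem tensor_wellDefined_isIdemProb_on_C0 {X Y : Type*}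
    [TopologicalSpace X] [CompactSpace X] [T2Space X]
    [TopologicalSpace Y] [CompactSpace Y] [T2Space Y]
    (μ : C(X, ℝ) → ℝ) (ν : C(Y, ℝ) → ℝ) (hμ : IsIdemProb μ) (hν : IsIdemProb ν) :
    -- well-definedness
    (∀ (n m : ℕ), 0 < n → 0 < m →
      ∀ (φ : Fin n → C(X, ℝ)) (ψ : Fin n → C(Y, ℝ))
        (φ' : Fin m → C(X, ℝ)) (ψ' : Fin m → C(Y, ℝ)),
      (∀ (x : X) (y : Y), (⨆ i, (φ i x + ψ i y)) = ⨆ j, (φ' j x + ψ' j y)) →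
      (⨆ i, (μ (φ i) + ν (ψ i))) = ⨆ j, (μ (φ' j) + ν (ψ' j))) ∧
    -- normality: any representation of the constant function c is sent to c
    (∀ (c : ℝ) (n : ℕ), 0 < n →
      ∀ (φ : Fin n → C(X, ℝ)) (ψ : Fin n → C(Y, ℝ)),
      (∀ (x : X) (y : Y), (⨆ i, (φ i x + ψ i y)) = c) →
      (⨆ i, (μ (φ i) + ν (ψ i))) = c) ∧
    -- max-plus homogeneity
    (∀ (c : ℝ) (n : ℕ), 0 < n →
      ∀ (φ : Fin n → C(X, ℝ)) (ψ : Fin n → C(Y, ℝ)),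
      (⨆ i, (μ (ContinuousMap.const X c + φ i) + ν (ψ i))) =
        c + ⨆ i, (μ (φ i) + ν (ψ i))) ∧
    -- max-additivity: value on a concatenation is the max of the values
    (∀ (n m : ℕ), 0 < n → 0 < m →
      ∀ (φ : Fin n → C(X, ℝ)) (ψ : Fin n → C(Y, ℝ))
        (φ' : Fin m → C(X, ℝ)) (ψ' : Fin m → C(Y, ℝ)),
      (⨆ k : Fin n ⊕ Fin m, (μ (Sum.elim φ φ' k) + ν (Sum.elim ψ ψ' k))) =
        max (⨆ i, (μ (φ i) + ν (ψ i))) (⨆ j, (μ (φ' j) + ν (ψ' j)))) :=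
  tensor_wellDefined_isIdemProb_on_C0_general μ ν hμ hν
end

section
/- Consequently, there is no family of bijections between the probability simplex and the max-plus simplex on finite sets which is natural with respect to the maps f and g above: any natural transformation α from the idempotent-measure construction I to the probability-measure construction P on the category of finite sets would force I((f,g)) = (I(f),I(g)) : I(X) → I(Y×Z) to be injective, contradicting the non-injectivity of (I(f),I(g)). -/
open scoped BigOperators

/-- The open probability simplex in ℝⁿ: strictly positive coordinates summing to 1. -/
def probSimplex (n : ℕ) : Set (Fin n → ℝ) :=
  {a | (∀ i, 0 < a i) ∧ ∑ i, a i = 1}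

/-- The max-plus simplex: all coordinates ≤ 0, maximum coordinate = 0. -/
def maxSimplex (n : ℕ) : Set (Fin n → ℝ) :=
  {l | (∀ i, l i ≤ 0) ∧ (⨆ i, l i) = 0}

/-- α ↦ (ln αᵢ − maxⱼ ln αⱼ)ᵢ. -/
noncomputable def toMax (n : ℕ) (a : Fin n → ℝ) : Fin n → ℝ :=
  fun i => Real.log (a i) - ⨆ j, Real.log (a j)

/-- λ ↦ (e^{λᵢ} / Σⱼ e^{λⱼ})ᵢ. -/
noncomputable def toProb (n : ℕ) (l : Fin n → ℝ) : Fin n → ℝ :=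
  fun i => Real.exp (l i) / ∑ j, Real.exp (l j)

/-- (P(f), P(g)) : P(X) → P(Y) × P(Z). -/
def probPush (a : Fin 3 → ℝ) : (Fin 2 → ℝ) × (Fin 2 → ℝ) :=
  (![a 0 + a 2, a 1], ![a 0 + a 1, a 2])

/-- (I(f), I(g)) : I(X) → I(Y) × I(Z). -/
def maxPush (l : Fin 3 → ℝ) : (Fin 2 → ℝ) × (Fin 2 → ℝ) :=
  (![max (l 0) (l 2), l 1], ![max (l 0) (l 1), l 2])

/-- probPush is injective. -/
lemma probPush_injective : Function.Injective probPush := by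
  intro a b h
  have h1 := congrFun (congrArg Prod.fst h) 0
  have h2 := congrFun (congrArg Prod.fst h) 1
  have h3 := congrFun (congrArg Prod.snd h) 1
  simp [probPush] at h1 h2 h3
  funext i
  fin_cases i <;> simp <;> linarith

lemma mem_maxSimplex_of (c : ℝ) (hc : c ≤ 0) :
    (![c, 0, 0] : Fin 3 → ℝ) ∈ maxSimplex 3 := by
  constructor
  · intro i; fin_cases i <;> simp [hc]
  · refine le_antisymm (ciSup_le fun i => ?_) ?_
    · fin_cases i <;> simp [hc]
    · have := le_ciSup (Finite.bddAbove_range (![c, 0, 0] : Fin 3 → ℝ)) (1 : Fin 3)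
      simpa using this

/-- There is no family of bijections between max-plus simplices and probability
simplices that is natural with respect to the morphism (f,g) : X → Y × Z
(P and I acting via the Fubini embeddings into the products P(Y) × P(Z) and
 I(Y) × I(Z)). -/
theorem no_natural_transformation :
    ¬ ∃ (aX : (Fin 3 → ℝ) → (Fin 3 → ℝ))
        (aW : ((Fin 2 → ℝ) × (Fin 2 → ℝ)) → ((Fin 2 → ℝ) × (Fin 2 → ℝ))),
      Set.BijOn aX (maxSimplex 3) (probSimplex 3) ∧
      Set.BijOn aW (maxSimplex 2 ×ˢ maxSimplex 2) (probSimplex 2 ×ˢ probSimplex 2) ∧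
      ∀ l ∈ maxSimplex 3, aW (maxPush l) = probPush (aX l) := by
  rintro ⟨aX, aW, hX, _, hnat⟩
  set l₁ : Fin 3 → ℝ := ![(-1 : ℝ), 0, 0] with hl₁
  set l₂ : Fin 3 → ℝ := ![(-2 : ℝ), 0, 0] with hl₂
  have h₁ : l₁ ∈ maxSimplex 3 := mem_maxSimplex_of (-1) (by norm_num)
  have h₂ : l₂ ∈ maxSimplex 3 := mem_maxSimplex_of (-2) (by norm_num)
  have hpush : maxPush l₁ = maxPush l₂ := by
    simp [maxPush, hl₁, hl₂]
  have hp : probPush (aX l₁) = probPush (aX l₂) := by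
    rw [← hnat l₁ h₁, ← hnat l₂ h₂, hpush]
  have haX : aX l₁ = aX l₂ := probPush_injective hp
  have : l₁ = l₂ := hX.injOn h₁ h₂ haX
  have := congrFun this 0
  simp [hl₁, hl₂] at this
end

section
/- For real α, β ≤ 0 with max(α,β) = 0 and idempotent probability measures μ₁, μ₂ on a compact Hausdorff space X, the functional α ⊙ μ₁ ⊕ β ⊙ μ₂ : φ ↦ max(α + μ₁(φ), β + μ₂(φ)) is again an idempotent probability measure, and supp(α ⊙ μ₁ ⊕ β ⊙ μ₂) = supp μ₁ ∪ supp μ₂. -/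
/-!
Everything reduces to one observation: if `c + μ ≤ ν` with `μ` idempotent and `ν` determined by
restrictions to `F`, then so is `μ`. Otherwise pick `φ = ψ` on `F` with `μ ψ < μ φ`; the
functions `ψ + t • (φ - ψ)` still agree with `ψ` on `F`, but max-additivity forces their
`μ`-values, hence their `ν`-values, to grow without bound in `t`.
-/

open scoped BigOperators

/-- The support of a functional μ : the intersection of all closed sets F such that
μ φ depends only on φ|_F. -/
def suppI {X : Type*} [TopologicalSpace X] (μ : C(X, ℝ) → ℝ) : Set X :=
  ⋂₀ {F : Set X | IsClosed F ∧ ∀ φ ψ : C(X, ℝ), (∀ x ∈ F, φ x = ψ x) → μ φ = μ ψ}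

/-- The space I(X) of idempotent probability measures with the topology of
pointwise convergence. -/
abbrev IPM (X : Type*) [TopologicalSpace X] : Type _ :=
  {μ : C(X, ℝ) → ℝ // IsIdemProb μ}

/-- S_I(A) = {μ ∈ I(X) : supp μ ∩ A ≠ ∅}. -/
def SI {X : Type*} [TopologicalSpace X] (A : Set X) : Set (IPM X) :=
  {μ | (suppI μ.1 ∩ A).Nonempty}

section

variable {X : Type*} [TopologicalSpace X]

def DeterminedOn (μ : C(X, ℝ) → ℝ) (F : Set X) : Prop :=
  ∀ φ ψ : C(X, ℝ), (∀ x ∈ F, φ x = ψ x) → μ φ = μ ψ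

theorem suppI_eq_sInter (μ : C(X, ℝ) → ℝ) :
    suppI μ = ⋂₀ {F : Set X | IsClosed F ∧ DeterminedOn μ F} :=
  rfl

theorem IsIdemProb.maxPlus {μ₁ μ₂ : C(X, ℝ) → ℝ} (hμ₁ : IsIdemProb μ₁) (hμ₂ : IsIdemProb μ₂)
    {a b : ℝ} (hab : max a b = 0) :
    IsIdemProb (fun φ : C(X, ℝ) => max (a + μ₁ φ) (b + μ₂ φ)) := by
  refine ⟨fun c => ?_, fun c φ => ?_, fun φ ψ => ?_⟩ <;> dsimp only
  · rw [hμ₁.1, hμ₂.1, max_add_add_right, hab, zero_add]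
  · rw [hμ₁.2.1, hμ₂.2.1, add_left_comm a, add_left_comm b, max_add_add_left]
  · rw [hμ₁.2.2, hμ₂.2.2, ← max_add_add_left, ← max_add_add_left]
    exact sup_sup_sup_comm _ _ _ _

theorem IsIdemProb.mono {μ : C(X, ℝ) → ℝ} (hμ : IsIdemProb μ) {φ ψ : C(X, ℝ)} (h : φ ≤ ψ) :
    μ φ ≤ μ ψ := by
  have h_sup := hμ.2.2 φ ψ
  rw [sup_eq_right.2 h] at h_sup
  exact h_sup ▸ le_max_left _ _

theorem le_const_add_sup_const_add_smul_sub (φ ψ : C(X, ℝ)) {η s : ℝ} (hη : 0 < η)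
    (hs : 0 ≤ s) :
    φ ≤ (ContinuousMap.const X η + ψ) ⊔
      (ContinuousMap.const X (-s) + (ψ + (1 + s / η) • (φ - ψ))) := by
  refine ContinuousMap.le_def.2 fun x => ?_
  simp only [ContinuousMap.sup_apply, ContinuousMap.add_apply, ContinuousMap.const_apply,
    ContinuousMap.smul_apply, ContinuousMap.sub_apply, smul_eq_mul, le_sup_iff]
  by_cases hx : φ x - ψ x < η
  · left
    linarith
  · right
    have : s ≤ s / η * (φ x - ψ x) := by
      rw [div_mul_eq_mul_div, le_div_iff₀ hη]
      exact mul_le_mul_of_nonneg_left (not_lt.1 hx) hs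
    linarith

theorem IsIdemProb.exists_le_apply_add_smul_sub {μ : C(X, ℝ) → ℝ} (hμ : IsIdemProb μ)
    {φ ψ : C(X, ℝ)} (hlt : μ ψ < μ φ) (s : ℝ) :
    ∃ t : ℝ, μ φ + s ≤ μ (ψ + t • (φ - ψ)) := by
  set η := (μ φ - μ ψ) / 2 with hη_def
  have hη : 0 < η := by positivity
  refine ⟨1 + max s 0 / η, ?_⟩
  have h := hμ.mono (le_const_add_sup_const_add_smul_sub φ ψ hη (le_max_right s 0))
  rw [hμ.2.2, hμ.2.1, hμ.2.1] at h
  rcases le_max_iff.1 h with h | h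
  · linarith
  · linarith [le_max_left s 0]

theorem IsIdemProb.determinedOn_of_add_le {μ ν : C(X, ℝ) → ℝ} (hμ : IsIdemProb μ) {c : ℝ}
    (hc : ∀ φ, c + μ φ ≤ ν φ) {F : Set X} (hF : DeterminedOn ν F) : DeterminedOn μ F := by
  suffices key : ∀ φ ψ : C(X, ℝ), (∀ x ∈ F, φ x = ψ x) → ¬ μ ψ < μ φ by
    intro φ ψ hφψ
    exact le_antisymm (not_lt.1 (key φ ψ hφψ))
      (not_lt.1 (key ψ φ fun x hx => (hφψ x hx).symm))
  intro φ ψ hφψ hlt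
  obtain ⟨t, ht⟩ := hμ.exists_le_apply_add_smul_sub hlt (ν ψ - c - μ φ + 1)
  have hν : ν (ψ + t • (φ - ψ)) = ν ψ := hF _ _ fun x hx => by simp [hφψ x hx]
  linarith [hc (ψ + t • (φ - ψ))]

theorem IsIdemProb.suppI_subset_of_add_le {μ ν : C(X, ℝ) → ℝ} (hμ : IsIdemProb μ) {c : ℝ}
    (hc : ∀ φ, c + μ φ ≤ ν φ) : suppI μ ⊆ suppI ν :=
  Set.sInter_subset_sInter fun _ ⟨hF, hνF⟩ => ⟨hF, hμ.determinedOn_of_add_le hc hνF⟩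

theorem suppI_maxPlus_subset (μ₁ μ₂ : C(X, ℝ) → ℝ) (a b : ℝ) :
    suppI (fun φ : C(X, ℝ) => max (a + μ₁ φ) (b + μ₂ φ)) ⊆ suppI μ₁ ∪ suppI μ₂ := by
  rw [suppI_eq_sInter μ₁, suppI_eq_sInter μ₂, Set.sInter_union_sInter]
  refine Set.subset_iInter₂ fun F ⟨⟨hF₁, hμ₁⟩, ⟨hF₂, hμ₂⟩⟩ => Set.sInter_subset_of_mem
    ⟨hF₁.union hF₂, fun φ ψ hφψ => ?_⟩
  dsimp only
  rw [hμ₁ φ ψ fun x hx => hφψ x (.inl hx), hμ₂ φ ψ fun x hx => hφψ x (.inr hx)]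

end

theorem maxPlus_combination_isIdemProb_supp_general {X : Type*} [TopologicalSpace X]
    (μ₁ μ₂ : C(X, ℝ) → ℝ)
    (hμ₁ : IsIdemProb μ₁) (hμ₂ : IsIdemProb μ₂)
    (a b : ℝ) (hab : max a b = 0) :
    IsIdemProb (fun φ : C(X, ℝ) => max (a + μ₁ φ) (b + μ₂ φ)) ∧
    suppI (fun φ : C(X, ℝ) => max (a + μ₁ φ) (b + μ₂ φ)) = suppI μ₁ ∪ suppI μ₂ :=
  ⟨hμ₁.maxPlus hμ₂ hab, (suppI_maxPlus_subset μ₁ μ₂ a b).antisymm <| Set.union_subset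
    (hμ₁.suppI_subset_of_add_le fun _ => le_max_left _ _)
    (hμ₂.suppI_subset_of_add_le fun _ => le_max_right _ _)⟩

theorem maxPlus_combination_isIdemProb_supp {X : Type*} [TopologicalSpace X]
    [CompactSpace X] [T2Space X] (μ₁ μ₂ : C(X, ℝ) → ℝ)
    (hμ₁ : IsIdemProb μ₁) (hμ₂ : IsIdemProb μ₂)
    (a b : ℝ) (ha : a ≤ 0) (hb : b ≤ 0) (hab : max a b = 0) :
    IsIdemProb (fun φ : C(X, ℝ) => max (a + μ₁ φ) (b + μ₂ φ)) ∧
    suppI (fun φ : C(X, ℝ) => max (a + μ₁ φ) (b + μ₂ φ)) = suppI μ₁ ∪ suppI μ₂ :=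
  maxPlus_combination_isIdemProb_supp_general μ₁ μ₂ hμ₁ hμ₂ a b hab
end

section
/- Fix x₀ ∈ X and for 0 < ε ≤ 1 define f_ε : I(X) → I(X) by f_ε(μ) = (ln(1-ε) − max(ln(1-ε), ln ε)) ⊙ μ ⊕ (ln ε − max(ln(1-ε), ln ε)) ⊙ δ_{x₀}. Then for every φ ∈ C(X,ℝ) and every ε with 0 < ε < 1/(1 + e^{2‖φ‖∞}), one has f_ε(μ)(φ) = μ(φ); consequently f_ε(μ) → μ pointwise as ε → 0⁺. -/
open scoped BigOperators

/-- f_ε(μ) = (ln(1-ε) − max(ln(1-ε), ln ε)) ⊙ μ ⊕ (ln ε − max(ln(1-ε), ln ε)) ⊙ δ_{x₀}. -/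
noncomputable def fEps {X : Type*} [TopologicalSpace X] (x₀ : X) (ε : ℝ)
    (μ : C(X, ℝ) → ℝ) : C(X, ℝ) → ℝ :=
  fun φ => max ((Real.log (1 - ε) - max (Real.log (1 - ε)) (Real.log ε)) + μ φ)
               ((Real.log ε - max (Real.log (1 - ε)) (Real.log ε)) + φ x₀)

theorem fEps_eq_and_tendsto {X : Type*} [TopologicalSpace X] [CompactSpace X] [T2Space X]
    (x₀ : X) (μ : C(X, ℝ) → ℝ) (hμ : IsIdemProb μ) :
    (∀ φ : C(X, ℝ), ∀ ε : ℝ, 0 < ε → ε < 1 / (1 + Real.exp (2 * ‖φ‖)) →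
      fEps x₀ ε μ φ = μ φ) ∧
    (∀ φ : C(X, ℝ),
      Filter.Tendsto (fun ε : ℝ => fEps x₀ ε μ φ) (nhdsWithin 0 (Set.Ioi 0))
        (nhds (μ φ))) := by
  obtain ⟨hconst, _, hmax⟩ := hμ
  -- monotonicity of μ
  have hmono : ∀ φ ψ : C(X, ℝ), (∀ x, φ x ≤ ψ x) → μ φ ≤ μ ψ := by
    intro φ ψ h
    have hsup : φ ⊔ ψ = ψ := by
      ext x
      exact max_eq_right (h x)
    have := hmax φ ψ
    rw [hsup] at this
    exact max_eq_right_iff.mp this.symm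
  -- lower bound μ φ ≥ -‖φ‖
  have hlow : ∀ φ : C(X, ℝ), -‖φ‖ ≤ μ φ := by
    intro φ
    have := hmono (ContinuousMap.const X (-‖φ‖)) φ (fun x => by
      have : |φ x| ≤ ‖φ‖ := by
        simpa using φ.norm_coe_le_norm x
      simpa using (abs_le.mp this).1)
    simpa [hconst] using this
  have key : ∀ φ : C(X, ℝ), ∀ ε : ℝ, 0 < ε → ε < 1 / (1 + Real.exp (2 * ‖φ‖)) →
      fEps x₀ ε μ φ = μ φ := by
    intro φ ε hε0 hε
    have hEpos : (0:ℝ) < 1 + Real.exp (2 * ‖φ‖) := by positivity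
    have hE1 : (1:ℝ) + 1 ≤ 1 + Real.exp (2 * ‖φ‖) := by
      have : (1:ℝ) ≤ Real.exp (2 * ‖φ‖) := Real.one_le_exp (by positivity)
      linarith
    have hhalf : ε < 1/2 := lt_of_lt_of_le hε (by
      rw [div_le_div_iff₀ hEpos (by norm_num)]
      linarith)
    have h1ε : 0 < 1 - ε := by linarith
    -- ε * exp(2‖φ‖) < 1 - ε, i.e. ε < (1-ε) * exp(-2‖φ‖)
    have hεE : ε * Real.exp (2 * ‖φ‖) < 1 - ε := by
      have := (lt_div_iff₀ hEpos).mp hε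
      linarith [this]
    have hlt : ε < (1 - ε) * Real.exp (-(2 * ‖φ‖)) := by
      rw [Real.exp_neg, ← div_eq_mul_inv, lt_div_iff₀ (Real.exp_pos _)]
      linarith
    have hlog : Real.log ε < Real.log (1 - ε) - 2 * ‖φ‖ := by
      have := Real.log_lt_log hε0 hlt
      rwa [Real.log_mul (ne_of_gt h1ε) (Real.exp_ne_zero _), Real.log_exp] at this
    have hnorm : (0:ℝ) ≤ ‖φ‖ := norm_nonneg _
    have hM : max (Real.log (1 - ε)) (Real.log ε) = Real.log (1 - ε) :=
      max_eq_left (by linarith)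
    have hx : φ x₀ ≤ ‖φ‖ := by
      have : |φ x₀| ≤ ‖φ‖ := by simpa using φ.norm_coe_le_norm x₀
      exact (abs_le.mp this).2
    have := hlow φ
    unfold fEps
    rw [hM]
    have h2 : Real.log ε - Real.log (1 - ε) + φ x₀ ≤ μ φ := by linarith
    rw [max_eq_left (by linarith)]
    ring
  constructor
  · exact key
  · intro φ
    have hδ : (0:ℝ) < 1 / (1 + Real.exp (2 * ‖φ‖)) := by positivity
    have heq : (fun ε : ℝ => fEps x₀ ε μ φ) =ᶠ[nhdsWithin 0 (Set.Ioi 0)]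
        (fun _ => μ φ) := by
      filter_upwards [Ioo_mem_nhdsGT_of_mem (Set.mem_Ico.mpr ⟨le_refl 0, hδ⟩)] with ε hε
      exact key φ ε hε.1 hε.2
    exact Filter.Tendsto.congr' heq.symm tendsto_const_nhds
end
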